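/- Let n ≥ 2 and regard ℍⁿ (n-tuples of real quaternions) as a finite-dimensional real vector space. Then the set of pairs (X,Y) ∈ ℍⁿ × ℍⁿ for which the eight vectors X, i·X, j·X, k·X, Y, i·Y, j·Y, k·Y are linearly independent over ℝ (equivalently, the real span of {X, iX, jX, kX} plus the real span of {Y, iY, jY, kY} has dimension 8) is open and dense in ℍⁿ × ℍⁿ. In other words, the almost quaternionic structure A = span_ℝ{id, L_i, L_j, L_k} of scalar multiplications on ℍⁿ is of generic rank four. -/

import Mathlib

/-!
The eight vectors depend linearly on `(X, Y)`, so their linear independence is an open condition.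
For density, pick a point `p₀` where they are independent and a linear `Φ : ℍⁿ → ℝ⁸` sending them
to the standard basis. The determinant of the matrix with rows `Φ (vₐ p)` is a polynomial in `p`,
hence analytic, and equals `1` at `p₀`; by the identity principle it is nonzero on a dense set, and
wherever it is nonzero the vectors are independent. Since `1, i, j, k` are a real basis of `ℍ`,
`p₀ = (e₀, e₁)` works as soon as `n ≥ 2`.
-/

open Quaternion

/-- Componentwise quaternion scalar multiplication on `ℍⁿ`. -/
noncomputable def qsmul {n : ℕ} (q : ℍ[ℝ]) (X : Fin n → ℍ[ℝ]) : Fin n → ℍ[ℝ] :=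
  fun m => q * X m

/-- The imaginary quaternion units `i`, `j`, `k`. -/
def qi : ℍ[ℝ] := ⟨0, 1, 0, 0⟩
def qj : ℍ[ℝ] := ⟨0, 0, 1, 0⟩
def qk : ℍ[ℝ] := ⟨0, 0, 0, 1⟩

open Set Filter Topology

theorem AnalyticAt.matrix_det {𝕜 E ι : Type*} [NontriviallyNormedField 𝕜] [NormedAddCommGroup E]
    [NormedSpace 𝕜 E] [Fintype ι] [DecidableEq ι] {M : E → Matrix ι ι 𝕜} {x : E}
    (hM : ∀ i j, AnalyticAt 𝕜 (fun p => M p i j) x) : AnalyticAt 𝕜 (fun p => (M p).det) x := by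
  simp_rw [Matrix.det_apply']
  exact Finset.analyticAt_fun_sum _ fun σ _ =>
    analyticAt_const.mul (Finset.analyticAt_fun_prod _ fun i _ => hM (σ i) i)

theorem AnalyticOnNhd.dense_setOf_ne_zero {E F : Type*} [NormedAddCommGroup E] [NormedSpace ℝ E]
    [NormedAddCommGroup F] [NormedSpace ℝ F] {f : E → F} (hf : AnalyticOnNhd ℝ f univ) {p₀ : E}
    (hp₀ : f p₀ ≠ 0) : Dense {p | f p ≠ 0} := by
  rw [dense_iff_inter_open]
  rintro U hU ⟨x, hx⟩
  by_contra hempty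
  have hfx : f =ᶠ[𝓝 x] 0 :=
    eventually_of_mem (hU.mem_nhds hx) fun y hy => not_not.1 fun hfy => hempty ⟨y, hy, hfy⟩
  exact hp₀ (hf.eqOn_zero_of_preconnected_of_eventuallyEq_zero isPreconnected_univ (mem_univ x)
    hfx (mem_univ p₀))

theorem LinearIndependent.exists_linearMap_apply_eq_single {K V ι : Type*} [Field K]
    [AddCommGroup V] [Module K V] [Fintype ι] [DecidableEq ι] {v : ι → V}
    (hv : LinearIndependent K v) : ∃ Φ : V →ₗ[K] ι → K, ∀ i, Φ (v i) = Pi.single i 1 := by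
  obtain ⟨Φ, hΦ⟩ := (Fintype.linearCombination K v).exists_leftInverse_of_injective
    (LinearMap.ker_eq_bot.2 hv.fintypeLinearCombination_injective)
  refine ⟨Φ, fun i => ?_⟩
  simpa using LinearMap.congr_fun hΦ (Pi.single i 1)

section LinearFamily

variable {E F ι : Type*} [NormedAddCommGroup E] [NormedSpace ℝ E] [FiniteDimensional ℝ E]
  [Fintype ι]

theorem isOpen_setOf_linearIndependent_apply [NormedAddCommGroup F] [NormedSpace ℝ F]
    [FiniteDimensional ℝ F] (V : E →ₗ[ℝ] ι → F) : IsOpen {p | LinearIndependent ℝ (V p)} :=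
  isOpen_setOfPred_linearIndependent.preimage V.continuous_of_finiteDimensional

theorem dense_setOf_linearIndependent_apply [AddCommGroup F] [Module ℝ F] (V : E →ₗ[ℝ] ι → F)
    {p₀ : E} (h₀ : LinearIndependent ℝ (V p₀)) : Dense {p | LinearIndependent ℝ (V p)} := by
  classical
  obtain ⟨Φ, hΦ⟩ := h₀.exists_linearMap_apply_eq_single
  let M : E → Matrix ι ι ℝ := fun p => Matrix.of fun i j => Φ (V p i) j
  have hM₀ : M p₀ = 1 := by
    ext i j
    simp [M, hΦ, Matrix.one_eq_pi_single]
  have hdet : AnalyticOnNhd ℝ (fun p => (M p).det) univ := fun x _ =>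
    AnalyticAt.matrix_det fun i j =>
      (LinearMap.proj j ∘ₗ Φ ∘ₗ LinearMap.proj i ∘ₗ V).toContinuousLinearMap.analyticAt x
  refine (hdet.dense_setOf_ne_zero (p₀ := p₀) (by simp [hM₀])).mono fun p hp => ?_
  have hrows : LinearIndependent ℝ (M p).row := Matrix.linearIndependent_rows_iff_isUnit.2 <|
    (Matrix.isUnit_iff_isUnit_det _).2 (isUnit_iff_ne_zero.2 hp)
  exact LinearIndependent.of_comp Φ hrows

end LinearFamily

noncomputable def quaternionicFrame (n : ℕ) :
    (Fin n → ℍ[ℝ]) × (Fin n → ℍ[ℝ]) →ₗ[ℝ] Fin 8 → Fin n → ℍ[ℝ] where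
  toFun p := ![p.1, qsmul qi p.1, qsmul qj p.1, qsmul qk p.1,
    p.2, qsmul qi p.2, qsmul qj p.2, qsmul qk p.2]
  map_add' p q := by ext a m : 2; fin_cases a <;> simp [qsmul, mul_add]
  map_smul' r p := by ext a m : 2; fin_cases a <;> simp [qsmul]

theorem smul_one_add_smul_qi_add_smul_qj_add_smul_qk_eq_zero {a b c d : ℝ} :
    a • 1 + b • qi + c • qj + d • qk = 0 ↔ a = 0 ∧ b = 0 ∧ c = 0 ∧ d = 0 := by
  simp only [Quaternion.ext_iff, Quaternion.re_add, Quaternion.imI_add, Quaternion.imJ_add,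
    Quaternion.imK_add, Quaternion.re_smul, Quaternion.imI_smul, Quaternion.imJ_smul,
    Quaternion.imK_smul]
  simp [qi, qj, qk]

theorem linearIndependent_quaternionicFrame_single {n : ℕ} {i₀ i₁ : Fin n} (h : i₀ ≠ i₁) :
    LinearIndependent ℝ (quaternionicFrame n (Pi.single i₀ 1, Pi.single i₁ 1)) := by
  rw [Fintype.linearIndependent_iff]
  intro c hc
  have h₀ := congrFun hc i₀
  have h₁ := congrFun hc i₁
  simp [quaternionicFrame, Fin.sum_univ_eight, qsmul, h, h.symm,
    smul_one_add_smul_qi_add_smul_qj_add_smul_qk_eq_zero] at h₀ h₁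
  intro a
  fin_cases a <;> simp [h₀, h₁]

/-- for `n ≥ 2`, the set of pairs `(X,Y)` of vectors in `ℍⁿ` such that
`X, iX, jX, kX, Y, iY, jY, kY` are linearly independent over `ℝ` is open and dense;
i.e. the almost quaternionic structure on `ℍⁿ` has generic rank four. -/
theorem stmt_11 (n : ℕ) (hn : 2 ≤ n) :
    IsOpen {p : (Fin n → ℍ[ℝ]) × (Fin n → ℍ[ℝ]) |
        LinearIndependent ℝ
          ![p.1, qsmul qi p.1, qsmul qj p.1, qsmul qk p.1,
            p.2, qsmul qi p.2, qsmul qj p.2, qsmul qk p.2]} ∧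
      Dense {p : (Fin n → ℍ[ℝ]) × (Fin n → ℍ[ℝ]) |
        LinearIndependent ℝ
          ![p.1, qsmul qi p.1, qsmul qj p.1, qsmul qk p.1,
            p.2, qsmul qi p.2, qsmul qj p.2, qsmul qk p.2]} := by
  have h₀ : LinearIndependent ℝ
      (quaternionicFrame n (Pi.single ⟨0, by omega⟩ 1, Pi.single ⟨1, hn⟩ 1)) :=
    linearIndependent_quaternionicFrame_single (by simp [Fin.ext_iff])
  exact ⟨isOpen_setOf_linearIndependent_apply (quaternionicFrame n),
    dense_setOf_linearIndependent_apply (quaternionicFrame n) h₀⟩
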